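/- Fix η ∈ (0,1), ξ₁, ξ₂ ∈ ℝ⁴ with |ξ₁ − ξ₂| ≥ 2η, and a bounded measurable Ω ⊂ ℝ⁴. Suppose v₁, v₂ : Ω → ℝ satisfy |v_i(x)| ≤ C(δ_i³/((δ_i²+|x−ξ_i|²)|x−ξ_i|²) + λ^{1/4} δ_i e^{−λ|x−ξ_i|}/|x−ξ_i|^{3/2}) for x outside B_{η/2}(ξ_i), and |v_i| ≤ C U_{δ_i,ξ_i} everywhere, where U_{δ,ξ}(x) = 2√2 δ/(δ²+|x−ξ|²). Then ∫_Ω v₁² v₂² ≤ C' δ₁² δ₂² |ln(δ₁δ₂)| for all sufficiently small δ₁, δ₂ > 0. -/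

import Mathlib

/-!
The separation `‖ξ₁ - ξ₂‖ ≥ 2η` puts every `x` at distance `≥ η` from `ξ₁` or from `ξ₂`, and there the
corresponding bubble satisfies `U_δ(x)² ≤ 8 δ² / η⁴`. Hence pointwise
`U₁² U₂² ≤ 8 δ₂² η⁻⁴ U₁² + 8 δ₁² η⁻⁴ U₂²`, and since `|vᵢ| ≤ C Uᵢ` it remains to bound `∫ U_δ²` over a
ball of radius `R ⊇ Ω`. In polar coordinates in `ℝ⁴` this is
`4 |B₁| ∫₀ᴿ 8 δ² r³ / (δ² + r²)² dr ≤ 16 |B₁| δ² log (1 + R² / δ²) = O(δ² |log δ|)`.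
-/

noncomputable section

open MeasureTheory

abbrev E4 := EuclideanSpace ℝ (Fin 4)

def bubble (δ : ℝ) (ξ : E4) (x : E4) : ℝ :=
  (2 * Real.sqrt 2) * δ / (δ^2 + ‖x - ξ‖^2)

open Metric Set Real

theorem setIntegral_ball_fun_norm_sub {E F : Type*} [NormedAddCommGroup E] [NormedSpace ℝ E]
    [FiniteDimensional ℝ E] [Nontrivial E] [MeasurableSpace E] [BorelSpace E] [NormedAddCommGroup F]
    [NormedSpace ℝ F] (μ : Measure E) [μ.IsAddHaarMeasure] (f : ℝ → F) (ξ : E) (R : ℝ) :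
    ∫ x in ball ξ R, f ‖x - ξ‖ ∂μ =
      Module.finrank ℝ E • μ.real (ball 0 1) •
        ∫ r in Ioo 0 R, r ^ (Module.finrank ℝ E - 1) • f r := by
  have hind : (ball ξ R).indicator (fun x => f ‖x - ξ‖) = fun x => (Iio R).indicator f ‖x - ξ‖ := by
    ext x
    simp [indicator, mem_ball, dist_eq_norm]
  rw [← integral_indicator measurableSet_ball, hind,
    integral_sub_right_eq_self (fun x => (Iio R).indicator f ‖x‖) ξ, integral_fun_norm_addHaar]
  simp_rw [← indicator_smul_apply (Iio R) (fun r : ℝ => r ^ (Module.finrank ℝ E - 1)) f]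
  rw [setIntegral_indicator measurableSet_Iio, Ioi_inter_Iio]

theorem integral_self_div_sq_add_sq {δ : ℝ} (hδ : δ ≠ 0) (R : ℝ) :
    ∫ r in (0)..R, r / (δ ^ 2 + r ^ 2) = log (1 + R ^ 2 / δ ^ 2) / 2 := by
  have hderiv : ∀ r ∈ uIcc 0 R,
      HasDerivAt (fun r => log (δ ^ 2 + r ^ 2) / 2) (r / (δ ^ 2 + r ^ 2)) r := by
    intro r _
    have hpos : 0 < δ ^ 2 + r ^ 2 := by positivity
    refine ((((hasDerivAt_pow 2 r).const_add (δ ^ 2)).log hpos.ne').div_const 2).congr_deriv ?_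
    field_simp
    ring
  have hcont : Continuous fun r : ℝ => r / (δ ^ 2 + r ^ 2) :=
    continuous_id.div (by fun_prop) fun r => by positivity
  rw [intervalIntegral.integral_eq_sub_of_hasDerivAt hderiv (hcont.intervalIntegrable _ _),
    ← sub_div, ← log_div (by positivity) (by positivity)]
  congr 2
  field_simp
  ring

theorem integral_Ioo_radial_bubble_sq_le {δ R : ℝ} (hδ : δ ≠ 0) (hR : 0 ≤ R) :
    ∫ r in Ioo 0 R, r ^ 3 * (δ ^ 2 / (δ ^ 2 + r ^ 2) ^ 2) ≤
      δ ^ 2 * (log (1 + R ^ 2 / δ ^ 2) / 2) := by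
  have hpos : ∀ r : ℝ, 0 < δ ^ 2 + r ^ 2 := fun r => by positivity
  have hle : ∀ r ∈ Icc 0 R, r ^ 3 * (δ ^ 2 / (δ ^ 2 + r ^ 2) ^ 2) ≤
      δ ^ 2 * (r / (δ ^ 2 + r ^ 2)) := by
    rintro r ⟨hr, -⟩
    calc r ^ 3 * (δ ^ 2 / (δ ^ 2 + r ^ 2) ^ 2)
        = δ ^ 2 * (r / (δ ^ 2 + r ^ 2)) * (r ^ 2 / (δ ^ 2 + r ^ 2)) := by
          field_simp
      _ ≤ δ ^ 2 * (r / (δ ^ 2 + r ^ 2)) :=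
          mul_le_of_le_one_right (by positivity)
            ((div_le_one (hpos r)).2 (le_add_of_nonneg_left (sq_nonneg δ)))
  rw [← integral_Ioc_eq_integral_Ioo, ← intervalIntegral.integral_of_le hR,
    ← integral_self_div_sq_add_sq hδ, ← intervalIntegral.integral_const_mul]
  refine intervalIntegral.integral_mono_on hR ?_ ?_ hle <;>
    refine Continuous.intervalIntegrable ?_ _ _
  · exact (continuous_pow 3).mul
      (continuous_const.div (by fun_prop) fun r => (pow_pos (hpos r) 2).ne')
  · exact continuous_const.mul (continuous_id.div (by fun_prop) fun r => (hpos r).ne')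

theorem bubble_sq (δ : ℝ) (ξ x : E4) :
    bubble δ ξ x ^ 2 = 8 * (δ ^ 2 / (δ ^ 2 + ‖x - ξ‖ ^ 2) ^ 2) := by
  have h : sqrt 2 ^ 2 = 2 := sq_sqrt zero_le_two
  rw [bubble, div_pow, mul_pow, mul_pow, h]
  ring

theorem continuous_bubble {δ : ℝ} (hδ : δ ≠ 0) (ξ : E4) : Continuous (bubble δ ξ) :=
  continuous_const.div (by fun_prop) fun x => by positivity

theorem setIntegral_ball_bubble_sq_le {δ R : ℝ} (hδ : δ ≠ 0) (hR : 0 ≤ R) (ξ : E4) :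
    ∫ x in ball ξ R, bubble δ ξ x ^ 2 ≤
      16 * volume.real (ball (0 : E4) 1) * δ ^ 2 * log (1 + R ^ 2 / δ ^ 2) := by
  simp_rw [bubble_sq]
  rw [integral_const_mul,
    setIntegral_ball_fun_norm_sub volume (fun r => δ ^ 2 / (δ ^ 2 + r ^ 2) ^ 2) ξ R,
    finrank_euclideanSpace_fin]
  simp only [nsmul_eq_mul, smul_eq_mul, Nat.cast_ofNat, Nat.add_one_sub_one]
  calc 8 * (4 * (volume.real (ball (0 : E4) 1) *
        ∫ r in Ioo 0 R, r ^ 3 * (δ ^ 2 / (δ ^ 2 + r ^ 2) ^ 2)))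
      ≤ 8 * (4 * (volume.real (ball (0 : E4) 1) * (δ ^ 2 * (log (1 + R ^ 2 / δ ^ 2) / 2)))) := by
        gcongr
        exact integral_Ioo_radial_bubble_sq_le hδ hR
    _ = _ := by ring

theorem bubble_sq_le_of_le_norm {δ η : ℝ} (hη : 0 < η) {ξ x : E4} (hx : η ≤ ‖x - ξ‖) :
    bubble δ ξ x ^ 2 ≤ 8 * δ ^ 2 / η ^ 4 := by
  rw [bubble_sq, ← mul_div_assoc]
  gcongr
  calc η ^ 4 = (η ^ 2) ^ 2 := by ring
    _ ≤ (δ ^ 2 + ‖x - ξ‖ ^ 2) ^ 2 := by gcongr; nlinarith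

theorem bubble_sq_mul_bubble_sq_le {δ₁ δ₂ η : ℝ} (hη : 0 < η) {ξ₁ ξ₂ : E4}
    (hsep : 2 * η ≤ ‖ξ₁ - ξ₂‖) (x : E4) :
    bubble δ₁ ξ₁ x ^ 2 * bubble δ₂ ξ₂ x ^ 2 ≤
      8 * δ₂ ^ 2 / η ^ 4 * bubble δ₁ ξ₁ x ^ 2 + 8 * δ₁ ^ 2 / η ^ 4 * bubble δ₂ ξ₂ x ^ 2 := by
  rcases le_or_gt η ‖x - ξ₁‖ with hfar | hnear
  · calc bubble δ₁ ξ₁ x ^ 2 * bubble δ₂ ξ₂ x ^ 2 ≤ 8 * δ₁ ^ 2 / η ^ 4 * bubble δ₂ ξ₂ x ^ 2 := by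
          gcongr; exact bubble_sq_le_of_le_norm hη hfar
      _ ≤ _ := le_add_of_nonneg_left (by positivity)
  · have hfar : η ≤ ‖x - ξ₂‖ := by
      have := norm_sub_le_norm_sub_add_norm_sub ξ₁ x ξ₂
      rw [norm_sub_rev ξ₁ x] at this
      linarith
    calc bubble δ₁ ξ₁ x ^ 2 * bubble δ₂ ξ₂ x ^ 2 ≤ 8 * δ₂ ^ 2 / η ^ 4 * bubble δ₁ ξ₁ x ^ 2 := by
          rw [mul_comm]; gcongr; exact bubble_sq_le_of_le_norm hη hfar
      _ ≤ _ := le_add_of_nonneg_right (by positivity)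

theorem integrableOn_bubble_sq {δ : ℝ} (hδ : δ ≠ 0) (ξ : E4) {Ω : Set E4}
    (hΩ : Bornology.IsBounded Ω) : IntegrableOn (fun x => bubble δ ξ x ^ 2) Ω :=
  (((continuous_bubble hδ ξ).pow 2).locallyIntegrable.integrableOn_isCompact
    hΩ.isCompact_closure).mono_set subset_closure

theorem setIntegral_bubble_sq_le {δ R : ℝ} (hδ : δ ≠ 0) (hR : 0 ≤ R) {ξ : E4} {Ω : Set E4}
    (hΩ : Ω ⊆ ball ξ R) :
    ∫ x in Ω, bubble δ ξ x ^ 2 ≤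
      16 * volume.real (ball (0 : E4) 1) * δ ^ 2 * log (1 + R ^ 2 / δ ^ 2) :=
  (setIntegral_mono_set (integrableOn_bubble_sq hδ ξ isBounded_ball)
    (ae_of_all _ fun _ => sq_nonneg _) hΩ.eventuallyLE).trans
    (setIntegral_ball_bubble_sq_le hδ hR ξ)

theorem setIntegral_sq_mul_sq_le_of_abs_le_bubble {η δ₁ δ₂ C R : ℝ} {ξ₁ ξ₂ : E4} {Ω : Set E4}
    {v₁ v₂ : E4 → ℝ}
    (hη : 0 < η) (hsep : 2 * η ≤ ‖ξ₁ - ξ₂‖) (hδ₁ : δ₁ ≠ 0) (hδ₂ : δ₂ ≠ 0)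
    (hΩ : MeasurableSet Ω) (hR : 0 ≤ R) (hΩ₁ : Ω ⊆ ball ξ₁ R) (hΩ₂ : Ω ⊆ ball ξ₂ R)
    (hv₁ : ∀ x ∈ Ω, |v₁ x| ≤ C * bubble δ₁ ξ₁ x) (hv₂ : ∀ x ∈ Ω, |v₂ x| ≤ C * bubble δ₂ ξ₂ x) :
    ∫ x in Ω, v₁ x ^ 2 * v₂ x ^ 2 ≤
      128 * volume.real (ball (0 : E4) 1) * C ^ 4 / η ^ 4 * δ₁ ^ 2 * δ₂ ^ 2 *
        (log (1 + R ^ 2 / δ₁ ^ 2) + log (1 + R ^ 2 / δ₂ ^ 2)) := by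
  set A := 8 * δ₂ ^ 2 / η ^ 4
  set B := 8 * δ₁ ^ 2 / η ^ 4
  have hsq : ∀ {v : E4 → ℝ} {δ ξ}, (∀ x ∈ Ω, |v x| ≤ C * bubble δ ξ x) →
      ∀ x ∈ Ω, v x ^ 2 ≤ C ^ 2 * bubble δ ξ x ^ 2 := fun hv x hx => by
    rw [← sq_abs, ← mul_pow]
    exact pow_le_pow_left₀ (abs_nonneg _) (hv x hx) 2
  have hpt : ∀ x ∈ Ω, v₁ x ^ 2 * v₂ x ^ 2 ≤
      C ^ 4 * (A * bubble δ₁ ξ₁ x ^ 2 + B * bubble δ₂ ξ₂ x ^ 2) := fun x hx =>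
    calc v₁ x ^ 2 * v₂ x ^ 2 ≤ (C ^ 2 * bubble δ₁ ξ₁ x ^ 2) * (C ^ 2 * bubble δ₂ ξ₂ x ^ 2) :=
          mul_le_mul (hsq hv₁ x hx) (hsq hv₂ x hx) (sq_nonneg _) (by positivity)
      _ = C ^ 4 * (bubble δ₁ ξ₁ x ^ 2 * bubble δ₂ ξ₂ x ^ 2) := by ring
      _ ≤ C ^ 4 * (A * bubble δ₁ ξ₁ x ^ 2 + B * bubble δ₂ ξ₂ x ^ 2) := by
          gcongr; exact bubble_sq_mul_bubble_sq_le hη hsep x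
  have hΩb : Bornology.IsBounded Ω := isBounded_ball.subset hΩ₁
  have hint₁ := integrableOn_bubble_sq hδ₁ ξ₁ hΩb
  have hint₂ := integrableOn_bubble_sq hδ₂ ξ₂ hΩb
  calc ∫ x in Ω, v₁ x ^ 2 * v₂ x ^ 2
      ≤ ∫ x in Ω, C ^ 4 * (A * bubble δ₁ ξ₁ x ^ 2 + B * bubble δ₂ ξ₂ x ^ 2) :=
        integral_mono_of_nonneg (ae_of_all _ fun _ => by positivity)
          (((hint₁.const_mul A).add (hint₂.const_mul B)).const_mul _)
          ((ae_restrict_iff' hΩ).2 (ae_of_all _ hpt))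
    _ = C ^ 4 * (A * (∫ x in Ω, bubble δ₁ ξ₁ x ^ 2) + B * ∫ x in Ω, bubble δ₂ ξ₂ x ^ 2) := by
        rw [integral_const_mul, integral_add (hint₁.const_mul A) (hint₂.const_mul B),
          integral_const_mul, integral_const_mul]
    _ ≤ C ^ 4 * (A * (16 * volume.real (ball (0 : E4) 1) * δ₁ ^ 2 * log (1 + R ^ 2 / δ₁ ^ 2)) +
          B * (16 * volume.real (ball (0 : E4) 1) * δ₂ ^ 2 * log (1 + R ^ 2 / δ₂ ^ 2))) := by
        gcongr
        · exact setIntegral_bubble_sq_le hδ₁ hR hΩ₁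
        · exact setIntegral_bubble_sq_le hδ₂ hR hΩ₂
    _ = _ := by ring

theorem log_one_add_div_sq_le {δ : ℝ} (hδ : 0 < δ) (hδe : δ ≤ exp (-1)) (R : ℝ) :
    log (1 + R ^ 2 / δ ^ 2) ≤ (log (1 + R ^ 2) + 2) * |log δ| := by
  have hδ1 : δ ≤ 1 := hδe.trans (exp_le_one_iff.2 (by norm_num))
  have hlogδ : log δ ≤ -1 := (log_le_log hδ hδe).trans_eq (log_exp _)
  have hlogR : 0 ≤ log (1 + R ^ 2) := log_nonneg (le_add_of_nonneg_right (sq_nonneg R))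
  calc log (1 + R ^ 2 / δ ^ 2) ≤ log ((1 + R ^ 2) / δ ^ 2) := by
        refine log_le_log (by positivity) ?_
        rw [add_div]
        gcongr
        exact one_le_one_div (by positivity) (pow_le_one₀ hδ.le hδ1)
    _ = log (1 + R ^ 2) + 2 * |log δ| := by
        rw [log_div (by positivity) (by positivity), log_pow, abs_of_neg (by linarith)]
        push_cast
        ring
    _ ≤ (log (1 + R ^ 2) + 2) * |log δ| := by
        nlinarith [le_abs.2 (Or.inr (show 1 ≤ -log δ by linarith))]

theorem abs_log_mul_of_le_one {a b : ℝ} (ha : 0 < a) (ha1 : a ≤ 1) (hb : 0 < b) (hb1 : b ≤ 1) :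
    |log (a * b)| = |log a| + |log b| := by
  have hla := log_nonpos ha.le ha1
  have hlb := log_nonpos hb.le hb1
  rw [log_mul ha.ne' hb.ne', abs_of_nonpos hla, abs_of_nonpos hlb, abs_of_nonpos (by linarith)]
  ring

theorem interaction_estimate (η : ℝ) (hη : η ∈ Set.Ioo (0:ℝ) 1)
    (ξ₁ ξ₂ : E4) (hsep : 2 * η ≤ ‖ξ₁ - ξ₂‖)
    (Ω : Set E4) (hΩm : MeasurableSet Ω) (hΩb : Bornology.IsBounded Ω)
    (C : ℝ) (hC : 0 < C) :
    ∃ C' > 0, ∃ δ₀ > 0, ∀ δ₁ δ₂ : ℝ, 0 < δ₁ → δ₁ < δ₀ → 0 < δ₂ → δ₂ < δ₀ →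
      ∀ lam : ℝ, 0 < lam → ∀ v₁ v₂ : E4 → ℝ,
      Measurable v₁ → Measurable v₂ →
      (∀ x ∈ Ω \ Metric.ball ξ₁ (η/2),
        |v₁ x| ≤ C * (δ₁^3 / ((δ₁^2 + ‖x - ξ₁‖^2) * ‖x - ξ₁‖^2)
          + lam ^ ((1:ℝ)/4) * δ₁ * Real.exp (-lam * ‖x - ξ₁‖) / ‖x - ξ₁‖ ^ ((3:ℝ)/2))) →
      (∀ x ∈ Ω \ Metric.ball ξ₂ (η/2),
        |v₂ x| ≤ C * (δ₂^3 / ((δ₂^2 + ‖x - ξ₂‖^2) * ‖x - ξ₂‖^2)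
          + lam ^ ((1:ℝ)/4) * δ₂ * Real.exp (-lam * ‖x - ξ₂‖) / ‖x - ξ₂‖ ^ ((3:ℝ)/2))) →
      (∀ x ∈ Ω, |v₁ x| ≤ C * bubble δ₁ ξ₁ x) →
      (∀ x ∈ Ω, |v₂ x| ≤ C * bubble δ₂ ξ₂ x) →
      (∫ x in Ω, (v₁ x)^2 * (v₂ x)^2)
        ≤ C' * δ₁^2 * δ₂^2 * |Real.log (δ₁ * δ₂)| := by
  obtain ⟨hη₀, -⟩ := hη
  obtain ⟨r₁, hr₁, hΩ₁⟩ := hΩb.subset_ball_lt 0 ξ₁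
  obtain ⟨r₂, -, hΩ₂⟩ := hΩb.subset_ball_lt 0 ξ₂
  set R := max r₁ r₂
  have hV : 0 < volume.real (ball (0 : E4) 1) :=
    ENNReal.toReal_pos (measure_ball_pos _ _ one_pos).ne' measure_ball_lt_top.ne
  have hlogR : 0 ≤ log (1 + R ^ 2) := log_nonneg (le_add_of_nonneg_right (sq_nonneg R))
  set K := 128 * volume.real (ball (0 : E4) 1) * C ^ 4 / η ^ 4
  set L := log (1 + R ^ 2) + 2
  refine ⟨K * L, by positivity, exp (-1), exp_pos _, ?_⟩
  intro δ₁ δ₂ hδ₁ hδ₁e hδ₂ hδ₂e lam _ v₁ v₂ _ _ _ _ hv₁ hv₂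
  have hδe1 : exp (-1) ≤ 1 := exp_le_one_iff.2 (by norm_num)
  calc ∫ x in Ω, v₁ x ^ 2 * v₂ x ^ 2
      ≤ K * δ₁ ^ 2 * δ₂ ^ 2 * (log (1 + R ^ 2 / δ₁ ^ 2) + log (1 + R ^ 2 / δ₂ ^ 2)) :=
        setIntegral_sq_mul_sq_le_of_abs_le_bubble hη₀ hsep hδ₁.ne' hδ₂.ne' hΩm
          (hr₁.le.trans (le_max_left _ _)) (hΩ₁.trans (ball_subset_ball (le_max_left _ _)))
          (hΩ₂.trans (ball_subset_ball (le_max_right _ _))) hv₁ hv₂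
    _ ≤ K * δ₁ ^ 2 * δ₂ ^ 2 * (L * |log δ₁| + L * |log δ₂|) := by
        gcongr
        · exact log_one_add_div_sq_le hδ₁ hδ₁e.le R
        · exact log_one_add_div_sq_le hδ₂ hδ₂e.le R
    _ = K * L * δ₁ ^ 2 * δ₂ ^ 2 * |log (δ₁ * δ₂)| := by
        rw [abs_log_mul_of_le_one hδ₁ (hδ₁e.le.trans hδe1) hδ₂ (hδ₂e.le.trans hδe1)]
        ring
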